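/- For every integer n ≥ 0 and all complex numbers b, c, u, v with b² + c² = 0, one has Σ_{k+ℓ=n, k,ℓ≥0} b^k c^ℓ H̃_k(u) H̃_ℓ(v) = (2ⁿ/n!)·(bu + cv)ⁿ. -/

import Mathlib

/-! The generating function of the normalized Hermite polynomials factors as
`Σ H̃ₙ(x) tⁿ = e^{2xt} · e^{-t²}`. Hence the generating function of the left-hand side,
`(Σ H̃ₖ(u) (bt)ᵏ) (Σ H̃ₗ(v) (ct)ˡ)`, equals `e^{2(bu+cv)t} · e^{-(b²+c²)t²} = e^{2(bu+cv)t}`,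
whose `n`-th coefficient is `2ⁿ (bu+cv)ⁿ / n!`. Everything is an identity of formal power series. -/

/-- Physicists' Hermite polynomial `H_n`, evaluated at a complex argument:
`H_n(x) = n! · Σ_{m=0}^{⌊n/2⌋} (−1)^m (2x)^{n−2m} / (m!(n−2m)!)`. -/
noncomputable def HC (n : ℕ) (x : ℂ) : ℂ :=
  (n.factorial : ℂ) * ∑ m ∈ Finset.range (n / 2 + 1),
    (-1 : ℂ) ^ m * (2 * x) ^ (n - 2 * m) / ((m.factorial : ℂ) * ((n - 2 * m).factorial : ℂ))

/-- Normalized Hermite polynomial `H̃_n(x) = H_n(x)/n!`. -/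
noncomputable def HtC (n : ℕ) (x : ℂ) : ℂ := HC n x / (n.factorial : ℂ)

open PowerSeries

theorem PowerSeries.rescale_expand {R : Type*} [CommRing R] (p : ℕ) (hp : p ≠ 0) (a : R)
    (f : R⟦X⟧) : rescale a (expand p hp f) = expand p hp (rescale (a ^ p) f) := by
  ext n
  simp only [coeff_rescale, coeff_expand]
  split_ifs with hdvd
  · obtain ⟨m, rfl⟩ := hdvd
    rw [Nat.mul_div_cancel_left _ (Nat.pos_of_ne_zero hp), pow_mul]
  · rw [mul_zero]

theorem Finset.Nat.sum_antidiagonal_ite_dvd_snd {M : Type*} [AddCommMonoid M] (p n : ℕ)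
    (f : ℕ × ℕ → M) :
    ∑ ij ∈ antidiagonal n, (if p ∣ ij.2 then f ij else 0)
      = ∑ m ∈ range (n / p + 1), f (n - p * m, p * m) := by
  rw [sum_ite, sum_const_zero, add_zero]
  refine sum_nbij' (fun ij => ij.2 / p) (fun m => (n - p * m, p * m)) ?_ ?_ ?_ ?_ ?_
  · rintro ⟨i, j⟩ hij
    simp only [mem_filter, HasAntidiagonal.mem_antidiagonal] at hij
    simpa [Nat.lt_succ_iff] using Nat.div_le_div_right (c := p) (show j ≤ n by omega)
  · intro m hm
    have hpm : p * m ≤ n := by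
      rw [mul_comm]
      exact Nat.mul_le_of_le_div p m n (by simpa [Nat.lt_succ_iff] using hm)
    simp [hpm]
  · rintro ⟨i, j⟩ hij
    simp only [mem_filter, HasAntidiagonal.mem_antidiagonal] at hij
    rw [Nat.mul_div_cancel' hij.2, Prod.mk.injEq]
    omega
  · intro m hm
    rcases p.eq_zero_or_pos with rfl | hp
    · simp_all
    · exact Nat.mul_div_cancel_left m hp
  · rintro ⟨i, j⟩ hij
    simp only [mem_filter, HasAntidiagonal.mem_antidiagonal] at hij
    rw [Nat.mul_div_cancel' hij.2, ← hij.1, Nat.add_sub_cancel]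

theorem HtC_eq_sum (n : ℕ) (x : ℂ) :
    HtC n x = ∑ m ∈ Finset.range (n / 2 + 1),
      (-1 : ℂ) ^ m * (2 * x) ^ (n - 2 * m) / ((m.factorial : ℂ) * ((n - 2 * m).factorial : ℂ)) :=
  mul_div_cancel_left₀ _ (Nat.cast_ne_zero.mpr n.factorial_ne_zero)

noncomputable def hermiteSeries (x : ℂ) : ℂ⟦X⟧ := mk fun n => HtC n x

theorem hermiteSeries_eq_rescale_exp_mul (x : ℂ) :
    hermiteSeries x = rescale (2 * x) (exp ℂ) * expand 2 two_ne_zero (rescale (-1) (exp ℂ)) := by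
  ext n
  rw [hermiteSeries, coeff_mk, HtC_eq_sum, coeff_mul]
  simp only [coeff_rescale, coeff_exp, coeff_expand, mul_ite, mul_zero]
  rw [Finset.Nat.sum_antidiagonal_ite_dvd_snd 2 n]
  refine Finset.sum_congr rfl fun m _ => ?_
  simp only [Nat.mul_div_cancel_left m two_pos, map_div₀, map_one, map_natCast]
  ring

theorem rescale_hermiteSeries (a x : ℂ) :
    rescale a (hermiteSeries x) =
      rescale (2 * x * a) (exp ℂ) * expand 2 two_ne_zero (rescale (-a ^ 2) (exp ℂ)) := by
  rw [hermiteSeries_eq_rescale_exp_mul, map_mul, rescale_rescale, rescale_expand, rescale_rescale,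
    neg_one_mul]

theorem hermiteSeries_addition {b c : ℂ} (h : b ^ 2 + c ^ 2 = 0) (u v : ℂ) :
    rescale b (hermiteSeries u) * rescale c (hermiteSeries v)
      = rescale (2 * (b * u + c * v)) (exp ℂ) := by
  rw [rescale_hermiteSeries, rescale_hermiteSeries, mul_mul_mul_comm, ← map_mul,
    exp_mul_exp_eq_exp_add, exp_mul_exp_eq_exp_add, ← neg_add, h, neg_zero, rescale_zero,
    RingHom.comp_apply, constantCoeff_exp, map_one, map_one, mul_one]
  congr 2
  ring

/-- For `b² + c² = 0`: `Σ_{k+ℓ=n} b^k c^ℓ H̃_k(u) H̃_ℓ(v) = (2ⁿ/n!)(bu + cv)ⁿ`. -/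
theorem hermite_addition_zero (n : ℕ) (b c u v : ℂ) (h : b ^ 2 + c ^ 2 = 0) :
    ∑ p ∈ Finset.HasAntidiagonal.antidiagonal n, b ^ p.1 * c ^ p.2 * HtC p.1 u * HtC p.2 v
      = (2 ^ n / (n.factorial : ℂ)) * (b * u + c * v) ^ n := calc
  _ = coeff n (rescale b (hermiteSeries u) * rescale c (hermiteSeries v)) := by
    simp only [coeff_mul, coeff_rescale, hermiteSeries, coeff_mk]
    exact Finset.sum_congr rfl fun _ _ => by ring
  _ = _ := by
    rw [hermiteSeries_addition h, coeff_rescale, coeff_exp, map_div₀, map_one, map_natCast, mul_pow]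
    ring
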